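/- Let M, S₁ⁿ, Y₁ⁿ, Xⁿ be discrete random vectors on a finite probability space, with M independent of S₁ⁿ, the states S₁,…,Sₙ i.i.d., and for each i the Markov chain Y₁ᵢ → (S₁ᵢ, Xᵢ) → (Y₁^{i−1}, S₁^{n∖i}, M), where Xᵢ is a deterministic function of (M, Y₁^{i−1}, Y₂^{i−1}). Then I(M; Y₁ⁿ | S₁ⁿ) ≤ Σᵢ I(Xᵢ; Y₁ᵢ | S₁ᵢ). -/

import Mathlib

open Finset

/-- Probability that a discrete random variable `X` takes value `x`,
under the probability mass function `μ` on a finite sample space. -/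
noncomputable def prob {Ω α : Type*} [Fintype Ω] [DecidableEq α]
    (μ : Ω → ℝ) (X : Ω → α) (x : α) : ℝ :=
  ∑ ω ∈ Finset.univ.filter (fun ω => X ω = x), μ ω

/-- `μ` is a probability mass function on the finite sample space `Ω`. -/
def IsPMF {Ω : Type*} [Fintype Ω] (μ : Ω → ℝ) : Prop :=
  (∀ ω, 0 ≤ μ ω) ∧ ∑ ω, μ ω = 1

/-- Shannon entropy (natural log) of a discrete random variable. -/
noncomputable def entH {Ω α : Type*} [Fintype Ω] [Fintype α] [DecidableEq α]
    (μ : Ω → ℝ) (X : Ω → α) : ℝ :=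
  ∑ x, -(prob μ X x * Real.log (prob μ X x))

/-- Conditional Shannon entropy `H(X | Y)`. -/
noncomputable def condH {Ω α β : Type*} [Fintype Ω] [Fintype α] [DecidableEq α]
    [Fintype β] [DecidableEq β] (μ : Ω → ℝ) (X : Ω → α) (Y : Ω → β) : ℝ :=
  entH μ (fun ω => (X ω, Y ω)) - entH μ Y

/-- Mutual information `I(X; Y)`. -/
noncomputable def mutInfo {Ω α β : Type*} [Fintype Ω] [Fintype α] [DecidableEq α]
    [Fintype β] [DecidableEq β] (μ : Ω → ℝ) (X : Ω → α) (Y : Ω → β) : ℝ :=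
  entH μ X + entH μ Y - entH μ (fun ω => (X ω, Y ω))

/-- Conditional mutual information `I(X; Y | Z)`. -/
noncomputable def condMutInfo {Ω α β γ : Type*} [Fintype Ω] [Fintype α] [DecidableEq α]
    [Fintype β] [DecidableEq β] [Fintype γ] [DecidableEq γ]
    (μ : Ω → ℝ) (X : Ω → α) (Y : Ω → β) (Z : Ω → γ) : ℝ :=
  condH μ X Z + condH μ Y Z - condH μ (fun ω => (X ω, Y ω)) Z

/-- `X` and `Y` are independent random variables under `μ`. -/
def IndepRV {Ω α β : Type*} [Fintype Ω] [DecidableEq α] [DecidableEq β]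
    (μ : Ω → ℝ) (X : Ω → α) (Y : Ω → β) : Prop :=
  ∀ x y, prob μ (fun ω => (X ω, Y ω)) (x, y) = prob μ X x * prob μ Y y

/-- `A → B → C` forms a Markov chain under `μ`:
`P(A,B,C) P(B) = P(A,B) P(B,C)` pointwise. -/
def MarkovChain {Ω α β γ : Type*} [Fintype Ω] [DecidableEq α] [DecidableEq β] [DecidableEq γ]
    (μ : Ω → ℝ) (A : Ω → α) (B : Ω → β) (C : Ω → γ) : Prop :=
  ∀ a b c, prob μ (fun ω => (A ω, B ω, C ω)) (a, b, c) * prob μ B b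
    = prob μ (fun ω => (A ω, B ω)) (a, b) * prob μ (fun ω => (B ω, C ω)) (b, c)

/-- Binary entropy function (natural log). -/
noncomputable def binEnt (x : ℝ) : ℝ :=
  -(x * Real.log x) - ((1 - x) * Real.log (1 - x))

/-!
By the chain rule, `I(M; Y₁ⁿ | S₁ⁿ) = ∑ᵢ I(M; Y₁ᵢ | Y₁^{i-1}, S₁ⁿ)`. Splitting `S₁ⁿ` into
`S₁ᵢ` and `S₁^{n∖i}`, the chain rule and nonnegativity of conditional mutual information bound
the `i`-th summand by `I(W; Y₁ᵢ | S₁ᵢ)` with `W = (Y₁^{i-1}, S₁^{n∖i}, M)`. The Markov chain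
`Y₁ᵢ → (S₁ᵢ, Xᵢ) → W` makes `I(W; Y₁ᵢ | S₁ᵢ, Xᵢ)` vanish, and then the chain rule applied to
`(W, Xᵢ)` in both orders gives `I(W; Y₁ᵢ | S₁ᵢ) ≤ I(Xᵢ; Y₁ᵢ | S₁ᵢ)`.
-/

lemma sub_mul_div_le_mul_log {p q r s : ℝ} (hp : 0 ≤ p) (hpq : p ≤ q) (hpr : p ≤ r)
    (hps : p ≤ s) :
    p - q * r / s ≤ p * (Real.log p + Real.log s - Real.log q - Real.log r) := by
  rcases hp.eq_or_lt with rfl | hp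
  · have : 0 ≤ q * r / s := by positivity
    simpa using this
  have hq : 0 < q := hp.trans_le hpq
  have hr : 0 < r := hp.trans_le hpr
  have hs : 0 < s := hp.trans_le hps
  have hlog := Real.log_le_sub_one_of_pos (x := q * r / (p * s)) (by positivity)
  rw [Real.log_div (by positivity) (by positivity), Real.log_mul hq.ne' hr.ne',
    Real.log_mul hp.ne' hs.ne'] at hlog
  calc p - q * r / s = p * (1 - q * r / (p * s)) := by field_simp
    _ ≤ _ := mul_le_mul_of_nonneg_left (by linarith) hp.le

lemma mul_log_eq_zero_of_mul_eq {p q r s : ℝ} (hp : 0 ≤ p) (hpq : p ≤ q) (hpr : p ≤ r)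
    (hps : p ≤ s) (h : p * s = q * r) :
    p * (Real.log p + Real.log s - Real.log q - Real.log r) = 0 := by
  rcases hp.eq_or_lt with rfl | hp
  · exact zero_mul _
  have hlog := congrArg Real.log h
  rw [Real.log_mul hp.ne' (hp.trans_le hps).ne',
    Real.log_mul (hp.trans_le hpq).ne' (hp.trans_le hpr).ne'] at hlog
  rw [show Real.log p + Real.log s - Real.log q - Real.log r = 0 by linarith, mul_zero]

section

variable {Ω α β γ δ : Type*} [Fintype Ω] [DecidableEq α] [DecidableEq β] [DecidableEq γ]
  [DecidableEq δ] {μ : Ω → ℝ}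

lemma prob_nonneg (hμ : ∀ ω, 0 ≤ μ ω) (X : Ω → α) (a : α) : 0 ≤ prob μ X a :=
  Finset.sum_nonneg fun ω _ => hμ ω

lemma sum_prob [Fintype α] (X : Ω → α) : ∑ a, prob μ X a = ∑ ω, μ ω := by
  simp only [prob, Finset.sum_filter]
  rw [Finset.sum_comm]
  simp

lemma prob_comp_eq_sum [Fintype α] (f : α → β) (X : Ω → α) (b : β) :
    prob μ (fun ω => f (X ω)) b = ∑ a with f a = b, prob μ X a := by
  rw [prob, ← Finset.sum_fiberwise_of_maps_to (g := X) (t := {a | f a = b}) (by simp)]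
  refine Finset.sum_congr rfl fun a ha => ?_
  rw [prob, Finset.filter_filter]
  congr 1
  ext ω
  simp only [Finset.mem_filter, Finset.mem_univ, true_and] at ha ⊢
  exact ⟨And.right, fun h => ⟨h ▸ ha, h⟩⟩

lemma prob_comp_of_injective {f : α → β} (hf : Function.Injective f) (X : Ω → α) (a : α) :
    prob μ (fun ω => f (X ω)) (f a) = prob μ X a := by
  simp only [prob, hf.eq_iff]

lemma prob_le_prob_comp (hμ : ∀ ω, 0 ≤ μ ω) (f : α → β) (X : Ω → α) (a : α) :
    prob μ X a ≤ prob μ (fun ω => f (X ω)) (f a) :=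
  Finset.sum_le_sum_of_subset_of_nonneg
    (fun ω => by simpa using congrArg f) fun ω _ _ => hμ ω

lemma sum_prob_pair_left [Fintype α] (A : Ω → α) (Z : Ω → γ) (z : γ) :
    ∑ a, prob μ (fun ω => (A ω, Z ω)) (a, z) = prob μ Z z := by
  simp only [prob, Finset.sum_filter, Prod.mk.injEq]
  rw [Finset.sum_comm]
  simp [ite_and]

lemma prob_le_marginals (hμ : ∀ ω, 0 ≤ μ ω) (A : Ω → α) (Y : Ω → β) (Z : Ω → γ)
    (w : (α × β) × γ) :
    prob μ (fun ω => ((A ω, Y ω), Z ω)) w ≤ prob μ (fun ω => (A ω, Z ω)) (w.1.1, w.2) ∧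
      prob μ (fun ω => ((A ω, Y ω), Z ω)) w ≤ prob μ (fun ω => (Y ω, Z ω)) (w.1.2, w.2) ∧
      prob μ (fun ω => ((A ω, Y ω), Z ω)) w ≤ prob μ Z w.2 :=
  ⟨prob_le_prob_comp hμ (fun w => (w.1.1, w.2)) _ w,
    prob_le_prob_comp hμ (fun w => (w.1.2, w.2)) _ w, prob_le_prob_comp hμ Prod.snd _ w⟩

variable [Fintype α] [Fintype β] [Fintype γ] [Fintype δ]

lemma entH_comp_eq_sum (f : α → β) (X : Ω → α) :
    entH μ (fun ω => f (X ω))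
      = ∑ a, -(prob μ X a * Real.log (prob μ (fun ω => f (X ω)) (f a))) := by
  rw [entH, ← Finset.sum_fiberwise Finset.univ f]
  refine Finset.sum_congr rfl fun b _ => ?_
  nth_rw 1 [prob_comp_eq_sum f X b]
  rw [Finset.sum_mul, ← Finset.sum_neg_distrib]
  exact Finset.sum_congr rfl fun a ha => by rw [(Finset.mem_filter.1 ha).2]

lemma entH_comp_of_injective {f : α → β} (hf : Function.Injective f) (X : Ω → α) :
    entH μ (fun ω => f (X ω)) = entH μ X := by
  rw [entH_comp_eq_sum]
  simp only [prob_comp_of_injective hf, entH]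

lemma entH_comp_of_leftInverse {f : α → β} (g : β → α) (hfg : Function.LeftInverse g f)
    (X : Ω → α) : entH μ (fun ω => f (X ω)) = entH μ X :=
  entH_comp_of_injective hfg.injective X

theorem condMutInfo_eq_sum (A : Ω → α) (Y : Ω → β) (Z : Ω → γ) :
    condMutInfo μ A Y Z = ∑ w : (α × β) × γ,
      prob μ (fun ω => ((A ω, Y ω), Z ω)) w *
        (Real.log (prob μ (fun ω => ((A ω, Y ω), Z ω)) w) + Real.log (prob μ Z w.2)
          - Real.log (prob μ (fun ω => (A ω, Z ω)) (w.1.1, w.2))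
          - Real.log (prob μ (fun ω => (Y ω, Z ω)) (w.1.2, w.2))) := by
  set W := fun ω => ((A ω, Y ω), Z ω)
  have hAZ : entH μ (fun ω => (A ω, Z ω)) = ∑ w, -(prob μ W w *
      Real.log (prob μ (fun ω => (A ω, Z ω)) (w.1.1, w.2))) :=
    entH_comp_eq_sum (fun w : (α × β) × γ => (w.1.1, w.2)) W
  have hYZ : entH μ (fun ω => (Y ω, Z ω)) = ∑ w, -(prob μ W w *
      Real.log (prob μ (fun ω => (Y ω, Z ω)) (w.1.2, w.2))) :=
    entH_comp_eq_sum (fun w : (α × β) × γ => (w.1.2, w.2)) W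
  have hZ : entH μ Z = ∑ w, -(prob μ W w * Real.log (prob μ Z w.2)) :=
    entH_comp_eq_sum Prod.snd W
  simp only [condMutInfo, condH]
  rw [hAZ, hYZ, hZ, entH]
  simp only [← Finset.sum_sub_distrib, ← Finset.sum_add_distrib]
  exact Finset.sum_congr rfl fun w _ => by ring

theorem condMutInfo_nonneg (hμ : ∀ ω, 0 ≤ μ ω) (A : Ω → α) (Y : Ω → β) (Z : Ω → γ) :
    0 ≤ condMutInfo μ A Y Z := by
  -- Gibbs' inequality against `P(a,z) P(y,z) / P(z)`, the law under which `A` and `Y` are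
  -- conditionally independent given `Z`.
  have hmass : ∑ w : (α × β) × γ, prob μ (fun ω => (A ω, Z ω)) (w.1.1, w.2) *
      prob μ (fun ω => (Y ω, Z ω)) (w.1.2, w.2) / prob μ Z w.2 = ∑ ω, μ ω := by
    rw [Fintype.sum_prod_type, Finset.sum_comm, ← sum_prob Z]
    refine Finset.sum_congr rfl fun z _ => ?_
    rw [Fintype.sum_prod_type, ← mul_self_div_self (prob μ Z z)]
    nth_rw 1 [← sum_prob_pair_left A Z z, ← sum_prob_pair_left Y Z z]
    rw [Finset.sum_mul_sum, Finset.sum_div]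
    simp only [Finset.sum_div]
  rw [condMutInfo_eq_sum]
  calc 0 = ∑ w : (α × β) × γ, prob μ (fun ω => ((A ω, Y ω), Z ω)) w
        - ∑ w : (α × β) × γ, prob μ (fun ω => (A ω, Z ω)) (w.1.1, w.2) *
          prob μ (fun ω => (Y ω, Z ω)) (w.1.2, w.2) / prob μ Z w.2 := by
        rw [sum_prob, hmass, sub_self]
    _ = _ := (Finset.sum_sub_distrib _ _).symm
    _ ≤ _ := Finset.sum_le_sum fun w _ => by
        obtain ⟨hq, hr, hs⟩ := prob_le_marginals hμ A Y Z w
        exact sub_mul_div_le_mul_log (prob_nonneg hμ _ _) hq hr hs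

theorem condMutInfo_eq_zero_of_markovChain (hμ : ∀ ω, 0 ≤ μ ω) {Y : Ω → β} {B : Ω → γ}
    {W : Ω → α} (hm : MarkovChain μ Y B W) : condMutInfo μ W Y B = 0 := by
  rw [condMutInfo_eq_sum]
  refine Finset.sum_eq_zero fun w _ => ?_
  obtain ⟨hq, hr, hs⟩ := prob_le_marginals hμ W Y B w
  refine mul_log_eq_zero_of_mul_eq (prob_nonneg hμ _ _) hq hr hs ?_
  obtain ⟨⟨c, y⟩, b⟩ := w
  have hp : prob μ (fun ω => ((W ω, Y ω), B ω)) ((c, y), b)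
      = prob μ (fun ω => (Y ω, B ω, W ω)) (y, b, c) :=
    prob_comp_of_injective (f := fun x : β × γ × α => ((x.2.2, x.1), x.2.1))
      (Function.LeftInverse.injective (g := fun x => (x.1.2, x.2, x.1.1)) fun _ => rfl)
      (fun ω => (Y ω, B ω, W ω)) (y, b, c)
  have hq : prob μ (fun ω => (W ω, B ω)) (c, b) = prob μ (fun ω => (B ω, W ω)) (b, c) :=
    prob_comp_of_injective Prod.swap_injective (fun ω => (B ω, W ω)) (b, c)
  rw [hp, hq, hm y b c, mul_comm]

theorem condMutInfo_comp_of_injective {α' β' γ' : Type*} [Fintype α'] [DecidableEq α']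
    [Fintype β'] [DecidableEq β'] [Fintype γ'] [DecidableEq γ'] {f : α → α'} {g : β → β'}
    {h : γ → γ'} (hf : Function.Injective f) (hg : Function.Injective g)
    (hh : Function.Injective h) (A : Ω → α) (Y : Ω → β) (Z : Ω → γ) :
    condMutInfo μ (fun ω => f (A ω)) (fun ω => g (Y ω)) (fun ω => h (Z ω))
      = condMutInfo μ A Y Z := by
  have hAZ : entH μ (fun ω => (f (A ω), h (Z ω))) = entH μ (fun ω => (A ω, Z ω)) :=
    entH_comp_of_injective (hf.prodMap hh) (fun ω => (A ω, Z ω))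
  have hYZ : entH μ (fun ω => (g (Y ω), h (Z ω))) = entH μ (fun ω => (Y ω, Z ω)) :=
    entH_comp_of_injective (hg.prodMap hh) (fun ω => (Y ω, Z ω))
  have hAYZ : entH μ (fun ω => ((f (A ω), g (Y ω)), h (Z ω)))
      = entH μ (fun ω => ((A ω, Y ω), Z ω)) :=
    entH_comp_of_injective ((hf.prodMap hg).prodMap hh) (fun ω => ((A ω, Y ω), Z ω))
  simp only [condMutInfo, condH, hAZ, hYZ, hAYZ, entH_comp_of_injective hh Z]

theorem condMutInfo_const_right (A : Ω → α) (b : β) (Z : Ω → γ) :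
    condMutInfo μ A (fun _ => b) Z = 0 := by
  have hbZ : entH μ (fun ω => (b, Z ω)) = entH μ Z :=
    entH_comp_of_injective (Prod.mk_right_injective b) Z
  have hAbZ : entH μ (fun ω => ((A ω, b), Z ω)) = entH μ (fun ω => (A ω, Z ω)) :=
    entH_comp_of_leftInverse (f := fun x : α × γ => ((x.1, b), x.2)) (fun x => (x.1.1, x.2))
      (fun _ => rfl) (fun ω => (A ω, Z ω))
  simp only [condMutInfo, condH, hbZ, hAbZ]
  ring

theorem condMutInfo_comm (A : Ω → α) (Y : Ω → β) (Z : Ω → γ) :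
    condMutInfo μ A Y Z = condMutInfo μ Y A Z := by
  have hswap : entH μ (fun ω => ((Y ω, A ω), Z ω)) = entH μ (fun ω => ((A ω, Y ω), Z ω)) :=
    entH_comp_of_injective (Prod.swap_injective.prodMap Function.injective_id)
      (fun ω => ((A ω, Y ω), Z ω))
  simp only [condMutInfo, condH, hswap]
  ring

theorem condMutInfo_prod_left (B : Ω → δ) (A : Ω → α) (Y : Ω → β) (C : Ω → γ) :
    condMutInfo μ (fun ω => (B ω, A ω)) Y C
      = condMutInfo μ B Y C + condMutInfo μ A Y (fun ω => (B ω, C ω)) := by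
  have hBAC : entH μ (fun ω => (A ω, B ω, C ω)) = entH μ (fun ω => ((B ω, A ω), C ω)) :=
    entH_comp_of_leftInverse (f := fun x : (δ × α) × γ => (x.1.2, x.1.1, x.2))
      (fun x => ((x.2.1, x.1), x.2.2)) (fun _ => rfl) (fun ω => ((B ω, A ω), C ω))
  have hBYC : entH μ (fun ω => (Y ω, B ω, C ω)) = entH μ (fun ω => ((B ω, Y ω), C ω)) :=
    entH_comp_of_leftInverse (f := fun x : (δ × β) × γ => (x.1.2, x.1.1, x.2))
      (fun x => ((x.2.1, x.1), x.2.2)) (fun _ => rfl) (fun ω => ((B ω, Y ω), C ω))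
  have hBAYC : entH μ (fun ω => ((A ω, Y ω), B ω, C ω))
      = entH μ (fun ω => (((B ω, A ω), Y ω), C ω)) :=
    entH_comp_of_leftInverse
      (f := fun x : ((δ × α) × β) × γ => ((x.1.1.2, x.1.2), x.1.1.1, x.2))
      (fun x => (((x.2.1, x.1.1), x.1.2), x.2.2)) (fun _ => rfl)
      (fun ω => (((B ω, A ω), Y ω), C ω))
  simp only [condMutInfo, condH, hBAC, hBYC, hBAYC]
  ring

theorem condMutInfo_prod_right (A : Ω → α) (U : Ω → δ) (V : Ω → β) (Z : Ω → γ) :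
    condMutInfo μ A (fun ω => (U ω, V ω)) Z
      = condMutInfo μ A U Z + condMutInfo μ A V (fun ω => (U ω, Z ω)) := by
  rw [condMutInfo_comm, condMutInfo_prod_left, condMutInfo_comm U, condMutInfo_comm V]

theorem condMutInfo_le_prod_left (hμ : ∀ ω, 0 ≤ μ ω) (A : Ω → α) (Y : Ω → β) (B : Ω → δ)
    (C : Ω → γ) :
    condMutInfo μ A Y (fun ω => (B ω, C ω)) ≤ condMutInfo μ (fun ω => (B ω, A ω)) Y C := by
  rw [condMutInfo_prod_left]
  linarith [condMutInfo_nonneg hμ B Y C]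

theorem condMutInfo_le_of_markovChain (hμ : ∀ ω, 0 ≤ μ ω) {W : Ω → α} {Y : Ω → β}
    {C : Ω → γ} {X : Ω → δ} (hm : MarkovChain μ Y (fun ω => (C ω, X ω)) W) :
    condMutInfo μ W Y C ≤ condMutInfo μ X Y C := by
  have hXW := condMutInfo_prod_left (μ := μ) X W Y C
  have hWX := condMutInfo_prod_left (μ := μ) W X Y C
  have hswap : condMutInfo μ (fun ω => (X ω, W ω)) Y C
      = condMutInfo μ (fun ω => (W ω, X ω)) Y C :=
    condMutInfo_comp_of_injective Prod.swap_injective Function.injective_id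
      Function.injective_id (fun ω => (W ω, X ω)) Y C
  have hzero : condMutInfo μ W Y (fun ω => (X ω, C ω)) = 0 :=
    (condMutInfo_comp_of_injective Function.injective_id Function.injective_id
      Prod.swap_injective W Y (fun ω => (C ω, X ω))).trans
      (condMutInfo_eq_zero_of_markovChain hμ hm)
  linarith [condMutInfo_nonneg hμ X Y (fun ω => (W ω, C ω))]

theorem condMutInfo_pi_eq_sum {n : ℕ} (A : Ω → α) (Y : Ω → Fin n → β) (Z : Ω → γ) :
    condMutInfo μ A Y Z = ∑ i : Fin n, condMutInfo μ A (fun ω => Y ω i)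
      (fun ω => ((fun j : Fin i => Y ω (Fin.castLE i.isLt.le j)), Z ω)) := by
  induction n with
  | zero =>
    obtain rfl : Y = fun _ => default := funext fun _ => Subsingleton.elim _ _
    rw [Fin.sum_univ_zero, condMutInfo_const_right]
  | succ n ih =>
    have hsplit : Function.Injective fun y : Fin (n + 1) → β => (Fin.init y, y (Fin.last n)) :=
      Function.LeftInverse.injective
        (g := fun p : (Fin n → β) × β => Fin.snoc (α := fun _ => β) p.1 p.2)
        fun y => Fin.snoc_init_self y
    calc condMutInfo μ A Y Z
        = condMutInfo μ A (fun ω => (Fin.init (Y ω), Y ω (Fin.last n))) Z :=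
          (condMutInfo_comp_of_injective Function.injective_id hsplit Function.injective_id
            A Y Z).symm
      _ = condMutInfo μ A (fun ω => Fin.init (Y ω)) Z + condMutInfo μ A
            (fun ω => Y ω (Fin.last n)) (fun ω => (Fin.init (Y ω), Z ω)) :=
          condMutInfo_prod_right A _ _ Z
      _ = _ := by
          rw [ih, Fin.sum_univ_castSucc]
          rfl

theorem condMutInfo_prod_pi_le_of_markovChain {ι σ π : Type*} [Fintype ι] [DecidableEq ι]
    [Fintype σ] [DecidableEq σ] [Fintype π] [DecidableEq π] (hμ : ∀ ω, 0 ≤ μ ω)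
    {M : Ω → α} {Y : Ω → β} {X : Ω → δ} {P : Ω → π} {S : Ω → ι → σ} {i : ι}
    (hm : MarkovChain μ Y (fun ω => (S ω i, X ω))
      (fun ω => (P ω, (fun j : {j // j ≠ i} => S ω j), M ω))) :
    condMutInfo μ M Y (fun ω => (P ω, S ω)) ≤ condMutInfo μ X Y (fun ω => S ω i) := by
  have hsplit : Function.Injective
      fun x : π × (ι → σ) => ((x.1, fun j : {j // j ≠ i} => x.2 j), x.2 i) :=
    Function.LeftInverse.injective
      (g := fun y => (y.1.1, (Equiv.funSplitAt i σ).symm (y.2, y.1.2)))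
      fun x => Prod.ext rfl ((Equiv.funSplitAt i σ).symm_apply_apply x.2)
  calc condMutInfo μ M Y (fun ω => (P ω, S ω))
      = condMutInfo μ M Y (fun ω => ((P ω, fun j : {j // j ≠ i} => S ω j), S ω i)) :=
        (condMutInfo_comp_of_injective Function.injective_id Function.injective_id hsplit
          M Y (fun ω => (P ω, S ω))).symm
    _ ≤ condMutInfo μ (fun ω => ((P ω, fun j : {j // j ≠ i} => S ω j), M ω)) Y
          (fun ω => S ω i) :=
        condMutInfo_le_prod_left hμ M Y _ _
    _ = condMutInfo μ (fun ω => (P ω, (fun j : {j // j ≠ i} => S ω j), M ω)) Y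
          (fun ω => S ω i) :=
        (condMutInfo_comp_of_injective (Equiv.prodAssoc _ _ _).injective Function.injective_id
          Function.injective_id (fun ω => ((P ω, fun j : {j // j ≠ i} => S ω j), M ω)) Y
          (fun ω => S ω i)).symm
    _ ≤ condMutInfo μ X Y (fun ω => S ω i) := condMutInfo_le_of_markovChain hμ hm

end

theorem converse_single_letterization_general
    {Ω 𝓜 𝓢 𝓨₁ 𝓧 : Type*} [Fintype Ω]
    [Fintype 𝓜] [DecidableEq 𝓜] [Fintype 𝓢] [DecidableEq 𝓢]
    [Fintype 𝓨₁] [DecidableEq 𝓨₁]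
    [Fintype 𝓧] [DecidableEq 𝓧]
    (n : ℕ) (μ : Ω → ℝ) (hμ : IsPMF μ)
    (M : Ω → 𝓜) (S₁ : Ω → Fin n → 𝓢) (Y₁ : Ω → Fin n → 𝓨₁)
    (X : Ω → Fin n → 𝓧)
    (hMarkov : ∀ i : Fin n, MarkovChain μ (fun ω => Y₁ ω i)
      (fun ω => (S₁ ω i, X ω i))
      (fun ω => ((fun j : Fin i => Y₁ ω (Fin.castLE i.isLt.le j)),
        (fun j : {j : Fin n // j ≠ i} => S₁ ω j.1), M ω))) :
    condMutInfo μ M Y₁ S₁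
      ≤ ∑ i, condMutInfo μ (fun ω => X ω i) (fun ω => Y₁ ω i) (fun ω => S₁ ω i) := by
  rw [condMutInfo_pi_eq_sum M Y₁ S₁]
  exact Finset.sum_le_sum fun i _ => condMutInfo_prod_pi_le_of_markovChain hμ.1 (hMarkov i)

/-- Converse single-letterization: if `M` is independent of the
i.i.d. state sequence `S₁ⁿ`, each `Xᵢ` is a deterministic function of
`(M, Y₁^{i−1}, Y₂^{i−1})`, and `Y₁ᵢ → (S₁ᵢ, Xᵢ) → (Y₁^{i−1}, S₁^{n∖i}, M)` is a
Markov chain for each `i`, then `I(M; Y₁ⁿ | S₁ⁿ) ≤ Σᵢ I(Xᵢ; Y₁ᵢ | S₁ᵢ)`. -/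
theorem converse_single_letterization
    {Ω 𝓜 𝓢 𝓨₁ 𝓨₂ 𝓧 : Type*} [Fintype Ω]
    [Fintype 𝓜] [DecidableEq 𝓜] [Fintype 𝓢] [DecidableEq 𝓢]
    [Fintype 𝓨₁] [DecidableEq 𝓨₁] [Fintype 𝓨₂] [DecidableEq 𝓨₂]
    [Fintype 𝓧] [DecidableEq 𝓧]
    (n : ℕ) (μ : Ω → ℝ) (hμ : IsPMF μ)
    (M : Ω → 𝓜) (S₁ : Ω → Fin n → 𝓢) (Y₁ : Ω → Fin n → 𝓨₁)
    (Y₂ : Ω → Fin n → 𝓨₂) (X : Ω → Fin n → 𝓧)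
    (hIndMS : IndepRV μ M S₁)
    (hiid : ∃ ν : 𝓢 → ℝ, ∀ s : Fin n → 𝓢, prob μ S₁ s = ∏ i, ν (s i))
    (hEnc : ∀ i : Fin n, ∃ f : 𝓜 → (Fin i → 𝓨₁) → (Fin i → 𝓨₂) → 𝓧,
      ∀ ω, X ω i = f (M ω) (fun j => Y₁ ω (Fin.castLE i.isLt.le j))
        (fun j => Y₂ ω (Fin.castLE i.isLt.le j)))
    (hMarkov : ∀ i : Fin n, MarkovChain μ (fun ω => Y₁ ω i)
      (fun ω => (S₁ ω i, X ω i))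
      (fun ω => ((fun j : Fin i => Y₁ ω (Fin.castLE i.isLt.le j)),
        (fun j : {j : Fin n // j ≠ i} => S₁ ω j.1), M ω))) :
    condMutInfo μ M Y₁ S₁
      ≤ ∑ i, condMutInfo μ (fun ω => X ω i) (fun ω => Y₁ ω i) (fun ω => S₁ ω i) :=
  converse_single_letterization_general n μ hμ M S₁ Y₁ X hMarkov
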